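/- arXiv:2506.10971 — 4 statements merged into one kernel-verified Lean document; each statement's English description precedes it below -/
import Mathlib

section
/- In the 1D guided masked discrete diffusion, let Z = Σ_{x=1}^{N-1} p(x)^{-w} p(x|z)^{1+w} and let q_t^{z,w} solve dq_t/dt = Z·(e^{-(T-t)}/(1-e^{-(T-t)})) Q̄[p^{z,w}] q_t with q_0 = δ_N, where Q̄[p^{z,w}](x,N) = p^{z,w}(x) for x < N, Q̄[p^{z,w}](N,N) = -1, zeros elsewhere, and p^{z,w}(x) = p(x)^{-w}p(x|z)^{1+w}/Z. Then q_t^{z,w}(x) = (1 - ((1-e^{-(T-t)})/(1-e^{-T}))^Z) p^{z,w}(x) for x < N and q_t^{z,w}(N) = ((1-e^{-(T-t)})/(1-e^{-T}))^Z. -/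
/-!
The rate matrix `Q̄[μ]` only reads the masked coordinate, so the masked mass `u = q N` solves
the scalar equation `u' = -Z e^{-(T-t)} / (1 - e^{-(T-t)}) u` on its own. Its rate is `Z` times
the logarithmic derivative of `r t = (1 - e^{-(T-t)}) / (1 - e^{-T})`, hence `u r^{-Z}` is
constant and `u = r^Z`. Each unmasked coordinate satisfies `q x' = -μ x u'`, so `q x + μ x u`
is conserved, which gives `q x = (1 - r^Z) μ x`. The endpoint `t = T`, where the rate blows up,
is reached by continuity.
-/

open Real Finset Matrix

/-- Time-rescaled 1D reverse rate matrix `Q̄[μ]` associated with a distribution `μ`: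
`Q̄[μ] x N = μ x` for unmasked `x`, `Q̄[μ] N N = -1`, zeros elsewhere. -/
noncomputable def revQbar (n : ℕ) (μ : Fin (n + 1) → ℝ) :
    Matrix (Fin (n + 1)) (Fin (n + 1)) ℝ :=
  Matrix.of fun x y =>
    if y = Fin.last n then (if x = Fin.last n then -1 else μ x) else 0

open Set

theorem mul_rpow_neg_eq_of_hasDerivAt {u r r' : ℝ → ℝ} {a b c : ℝ}
    (hr : ∀ t ∈ Ico a b, 0 < r t) (hr' : ∀ t ∈ Ico a b, HasDerivAt r (r' t) t)
    (hu : ∀ t ∈ Ico a b, HasDerivAt u (c * (r' t / r t) * u t) t) :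
    ∀ t ∈ Ico a b, u t * r t ^ (-c) = u a * r a ^ (-c) := by
  have hderiv : ∀ s ∈ Ico a b, HasDerivAt (fun s => u s * r s ^ (-c)) 0 s := by
    intro s hs
    refine ((hu s hs).mul ((hr' s hs).rpow_const (p := -c) (Or.inl (hr s hs).ne'))).congr_deriv ?_
    rw [rpow_sub_one (hr s hs).ne']
    field_simp
    ring
  intro t ht
  have hsub : Icc a t ⊆ Ico a b := Icc_subset_Ico_right ht.2
  exact constant_of_has_deriv_right_zero
    (fun s hs => (hderiv s (hsub hs)).continuousAt.continuousWithinAt)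
    (fun s hs => (hderiv s (hsub (Ico_subset_Icc_self hs))).hasDerivWithinAt)
    t (right_mem_Icc.2 ht.1)

noncomputable def maskRatio (T t : ℝ) : ℝ :=
  (1 - exp (-(T - t))) / (1 - exp (-T))

theorem hasDerivAt_maskRatio (T t : ℝ) :
    HasDerivAt (maskRatio T) (-exp (-(T - t)) / (1 - exp (-T))) t := by
  have h : HasDerivAt (fun s => -(T - s)) 1 t := by
    simpa using (hasDerivAt_id t).sub_const T
  have h' := (h.exp.const_sub 1).div_const (1 - exp (-T))
  rw [mul_one] at h'
  exact h'

theorem continuous_maskRatio (T : ℝ) : Continuous (maskRatio T) :=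
  continuous_iff_continuousAt.2 fun t => (hasDerivAt_maskRatio T t).continuousAt

theorem one_sub_exp_neg_pos {s : ℝ} (hs : 0 < s) : 0 < 1 - exp (-s) :=
  sub_pos.2 (exp_lt_one_iff.2 (neg_lt_zero.2 hs))

theorem maskRatio_pos {T t : ℝ} (hT : 0 < T) (ht : t < T) : 0 < maskRatio T t :=
  div_pos (one_sub_exp_neg_pos (sub_pos.2 ht)) (one_sub_exp_neg_pos hT)

theorem maskRatio_zero {T : ℝ} (hT : 0 < T) : maskRatio T 0 = 1 := by
  simp [maskRatio, (one_sub_exp_neg_pos hT).ne']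

theorem maskRatio_logDeriv {T : ℝ} (hT : 0 < T) (t : ℝ) :
    -exp (-(T - t)) / (1 - exp (-T)) / maskRatio T t
      = -(exp (-(T - t)) / (1 - exp (-(T - t)))) := by
  rw [maskRatio, div_div_div_cancel_right₀ (one_sub_exp_neg_pos hT).ne', neg_div]

section revQbar

variable {n : ℕ} {μ : Fin (n + 1) → ℝ} {q : ℝ → Fin (n + 1) → ℝ}

theorem revQbar_mulVec_apply (v : Fin (n + 1) → ℝ) (x : Fin (n + 1)) :
    (revQbar n μ *ᵥ v) x = (if x = Fin.last n then -1 else μ x) * v (Fin.last n) := by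
  simp only [mulVec, dotProduct, revQbar, of_apply]
  rw [sum_eq_single (Fin.last n) (fun y _ hy => by simp [hy]) (by simp)]
  simp

theorem hasDerivAt_apply_of_revQbar {k t : ℝ}
    (hq : HasDerivAt q (k • revQbar n μ *ᵥ q t) t) (x : Fin (n + 1)) :
    HasDerivAt (fun s => q s x)
      (k * ((if x = Fin.last n then -1 else μ x) * q t (Fin.last n))) t := by
  simpa [revQbar_mulVec_apply] using hasDerivAt_pi.1 hq x

theorem revQbar_conserved {k : ℝ → ℝ} {a b : ℝ} (hqc : ContinuousOn q (Icc a b))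
    (hode : ∀ t ∈ Ico a b, HasDerivAt q (k t • revQbar n μ *ᵥ q t) t)
    {x : Fin (n + 1)} (hx : x ≠ Fin.last n) :
    ∀ t ∈ Icc a b, q t x + μ x * q t (Fin.last n) = q a x + μ x * q a (Fin.last n) := by
  have hcoord (y : Fin (n + 1)) : ContinuousOn (fun t => q t y) (Icc a b) :=
    (continuous_apply y).comp_continuousOn hqc
  refine constant_of_has_deriv_right_zero ((hcoord x).add (continuousOn_const.mul
    (hcoord _))) fun t ht => ?_
  have h := (hasDerivAt_apply_of_revQbar (hode t ht) x).add
    ((hasDerivAt_apply_of_revQbar (hode t ht) (Fin.last n)).const_mul (μ x))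
  simp only [if_neg hx, if_true] at h
  exact (h.congr_deriv (by ring)).hasDerivWithinAt

theorem revQbar_apply_last_eq_maskRatio_rpow {T Z : ℝ} (hT : 0 < T) (hZ : 0 ≤ Z)
    (hq0 : q 0 (Fin.last n) = 1) (hqc : ContinuousOn q (Icc 0 T))
    (hode : ∀ t ∈ Ico (0 : ℝ) T, HasDerivAt q
      ((Z * (exp (-(T - t)) / (1 - exp (-(T - t))))) • revQbar n μ *ᵥ q t) t) :
    ∀ t ∈ Icc (0 : ℝ) T, q t (Fin.last n) = maskRatio T t ^ Z := by
  have hIco : ∀ t ∈ Ico (0 : ℝ) T, q t (Fin.last n) = maskRatio T t ^ Z := by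
    intro t ht
    have hinv := mul_rpow_neg_eq_of_hasDerivAt (u := fun s => q s (Fin.last n)) (c := Z)
      (fun s hs => maskRatio_pos hT hs.2) (fun s _ => hasDerivAt_maskRatio T s)
      (fun s hs => by
        convert hasDerivAt_apply_of_revQbar (hode s hs) (Fin.last n) using 1
        rw [maskRatio_logDeriv hT, if_pos rfl]
        ring) t ht
    rwa [hq0, maskRatio_zero hT, one_rpow, mul_one, rpow_neg (maskRatio_pos hT ht.2).le,
      mul_inv_eq_one₀ (rpow_pos_of_pos (maskRatio_pos hT ht.2) Z).ne'] at hinv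
  exact EqOn.of_subset_closure hIco ((continuous_apply _).comp_continuousOn hqc)
    ((continuous_maskRatio T).continuousOn.rpow_const fun _ _ => Or.inr hZ)
    Ico_subset_Icc_self (closure_Ico hT.ne).superset

end revQbar

theorem guided_reverse_density_1d_general (n : ℕ) (T : ℝ) (hT : 0 < T) (w : ℝ)
    (p pz : Fin (n + 1) → ℝ)
    (hp0 : ∀ x, 0 ≤ p x)
    (hpz0 : ∀ x, 0 ≤ pz x)
    (Z : ℝ) (hZ : Z = ∑ x ∈ Finset.univ.erase (Fin.last n), p x ^ (-w) * pz x ^ (1 + w))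
    (ptw : Fin (n + 1) → ℝ)
    (q : ℝ → Fin (n + 1) → ℝ)
    (hq0 : q 0 = fun x => if x = Fin.last n then 1 else 0)
    (hqc : ContinuousOn q (Set.Icc 0 T))
    (hode : ∀ t ∈ Set.Ico (0 : ℝ) T, HasDerivAt q
      ((Z * (Real.exp (-(T - t)) / (1 - Real.exp (-(T - t))))) •
        (revQbar n ptw).mulVec (q t)) t) :
    ∀ t ∈ Set.Icc (0 : ℝ) T, ∀ x,
      q t x =
        if x = Fin.last n then
          ((1 - Real.exp (-(T - t))) / (1 - Real.exp (-T))) ^ Z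
        else
          (1 - ((1 - Real.exp (-(T - t))) / (1 - Real.exp (-T))) ^ Z) * ptw x := by
  intro t ht x
  have hZ0 : 0 ≤ Z := hZ ▸ sum_nonneg fun x _ =>
    mul_nonneg (rpow_nonneg (hp0 x) _) (rpow_nonneg (hpz0 x) _)
  have hlast : q t (Fin.last n) = maskRatio T t ^ Z :=
    revQbar_apply_last_eq_maskRatio_rpow hT hZ0 (by simp [hq0]) hqc hode t ht
  split_ifs with hx
  · exact hx ▸ hlast
  · have hcons := revQbar_conserved hqc hode hx t ht
    simp only [hq0, if_neg hx, if_true] at hcons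
    rw [← maskRatio, ← hlast]
    linear_combination hcons

/-- explicit solution of the 1D guided reverse sampling dynamics.
With `Z = Σ_{x<N} p(x)^{-w} p(x|z)^{1+w}` and tilted distribution
`p^{z,w}(x) = p(x)^{-w} p(x|z)^{1+w} / Z`, if `q` solves
`dq_t/dt = Z (e^{-(T-t)}/(1-e^{-(T-t)})) Q̄[p^{z,w}] q_t` with `q_0 = δ_N`, then
`q_t x = (1 - r(t)^Z) p^{z,w}(x)` for `x < N` and `q_t N = r(t)^Z`,
where `r t = (1-e^{-(T-t)})/(1-e^{-T})`. -/
theorem guided_reverse_density_1d (n : ℕ) (T : ℝ) (hT : 0 < T) (w : ℝ) (hw : -1 ≤ w)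
    (p pz : Fin (n + 1) → ℝ)
    (hp0 : ∀ x, 0 ≤ p x) (hpN : p (Fin.last n) = 0) (hp1 : ∑ x, p x = 1)
    (hpz0 : ∀ x, 0 ≤ pz x) (hpzN : pz (Fin.last n) = 0) (hpz1 : ∑ x, pz x = 1)
    (hsupp : ∀ x, 0 < pz x → 0 < p x)
    (Z : ℝ) (hZ : Z = ∑ x ∈ Finset.univ.erase (Fin.last n), p x ^ (-w) * pz x ^ (1 + w))
    (ptw : Fin (n + 1) → ℝ) (hptw : ∀ x, ptw x = p x ^ (-w) * pz x ^ (1 + w) / Z)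
    (q : ℝ → Fin (n + 1) → ℝ)
    (hq0 : q 0 = fun x => if x = Fin.last n then 1 else 0)
    (hqc : ContinuousOn q (Set.Icc 0 T))
    (hode : ∀ t ∈ Set.Ico (0 : ℝ) T, HasDerivAt q
      ((Z * (Real.exp (-(T - t)) / (1 - Real.exp (-(T - t))))) •
        (revQbar n ptw).mulVec (q t)) t) :
    ∀ t ∈ Set.Icc (0 : ℝ) T, ∀ x,
      q t x =
        if x = Fin.last n then
          ((1 - Real.exp (-(T - t))) / (1 - Real.exp (-T))) ^ Z
        else
          (1 - ((1 - Real.exp (-(T - t))) / (1 - Real.exp (-T))) ^ Z) * ptw x :=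
  guided_reverse_density_1d_general n T hT w p pz hp0 hpz0 Z hZ ptw q hq0 hqc hode
end

section
/- Suppose p(·) = Σ_{k=1}^M a_k p(·|z_k) on {1,...,N-1}, with p(·|z_k) supported on X_k, and let S_1 = X_1 ∩ (∪_{k≥2} X_k) be nonempty with I_1 = {k ≥ 2 : X_k ∩ X_1 ≠ ∅}. Then the tilted distribution satisfies p^{z_1,w}(x) ∝ p(x|z_1) for x ∈ X_1\S_1, p^{z_1,w}(x) ∝ (a_1 p(x|z_1)/(Σ_{k∈I_1∪{1}} a_k p(x|z_k)))^w · p(x|z_1) for x ∈ S_1, and p^{z_1,w}(x) = 0 otherwise. Consequently, as w → ∞, p^{z_1,w} converges pointwise to the restriction (normalized) of p(·|z_1) to X_1\S_1. -/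
open Real Finset Filter
open scoped Classical

/-!
On the support of `p(·|z_1)` one has `p^{-w} p(·|z_1)^{1+w} = a_1^{-w} r^w p(·|z_1)`, where
`r = a_1 p(·|z_1) / p` is the posterior probability of `z_1`; the factor `a_1^{-w}` cancels in
the normalisation. The posterior equals `1` exactly on `X_1 \ S_1` and lies in `(0, 1)` on `S_1`,
so `r^w` tends to the indicator of `X_1 \ S_1`, and the normalised weights converge because the
sum over the finite state space does.
-/

open Function

theorem tendsto_rpow_atTop_of_nonneg_of_le_one {r : ℝ} (h0 : 0 ≤ r) (h1 : r ≤ 1) :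
    Tendsto (fun w : ℝ => r ^ w) atTop (nhds (if r = 1 then 1 else 0)) := by
  split_ifs with hr
  · subst hr
    simp
  · exact tendsto_rpow_atTop_of_base_lt_one r (by linarith) (lt_of_le_of_ne h1 hr)

namespace FiniteMixture

variable {ι α : Type*} [Fintype ι] (a : ι → ℝ) (P : ι → α → ℝ)

noncomputable def mixture (x : α) : ℝ := ∑ k, a k * P k x

noncomputable def posterior (i : ι) (x : α) : ℝ := a i * P i x / mixture a P x

noncomputable def tilted [Fintype α] (i : ι) (w : ℝ) (x : α) : ℝ :=
  mixture a P x ^ (-w) * P i x ^ (1 + w) / ∑ y, mixture a P y ^ (-w) * P i y ^ (1 + w)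

variable {a P}

theorem mul_le_mixture (ha : ∀ k, 0 ≤ a k) (hP : ∀ k x, 0 ≤ P k x) (i : ι) (x : α) :
    a i * P i x ≤ mixture a P x :=
  single_le_sum (fun k _ => mul_nonneg (ha k) (hP k x)) (mem_univ i)

theorem mixture_nonneg (ha : ∀ k, 0 ≤ a k) (hP : ∀ k x, 0 ≤ P k x) (x : α) :
    0 ≤ mixture a P x :=
  sum_nonneg fun k _ => mul_nonneg (ha k) (hP k x)

theorem mul_lt_mixture (ha : ∀ k, 0 < a k) (hP : ∀ k x, 0 ≤ P k x) {i j : ι} (hji : j ≠ i)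
    {x : α} (hj : P j x ≠ 0) : a i * P i x < mixture a P x :=
  single_lt_sum hji (mem_univ i) (mem_univ j)
    (mul_pos (ha j) ((hP j x).lt_of_ne' hj)) fun k _ _ => mul_nonneg (ha k).le (hP k x)

theorem mixture_eq_of_forall_ne {i : ι} {x : α} (h : ∀ k ≠ i, P k x = 0) :
    mixture a P x = a i * P i x :=
  sum_eq_single i (fun k _ hk => by rw [h k hk, mul_zero]) (by simp)

theorem mixture_eq_sum_overlap [DecidableEq ι] {i : ι} {x : α} (hx : P i x ≠ 0) :
    mixture a P x = ∑ k ∈ univ.filter (fun k => k = i ∨ (support (P k) ∩ support (P i)).Nonempty),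
      a k * P k x :=
  (sum_filter_of_ne fun _ _ hk => Or.inr ⟨x, right_ne_zero_of_mul hk, hx⟩).symm

theorem posterior_pos (ha : ∀ k, 0 < a k) (hP : ∀ k x, 0 ≤ P k x) {i : ι} {x : α}
    (hx : P i x ≠ 0) : 0 < posterior a P i x := by
  have hpos : 0 < a i * P i x := mul_pos (ha i) ((hP i x).lt_of_ne' hx)
  exact div_pos hpos (hpos.trans_le (mul_le_mixture (fun k => (ha k).le) hP i x))

theorem posterior_nonneg (ha : ∀ k, 0 ≤ a k) (hP : ∀ k x, 0 ≤ P k x) (i : ι) (x : α) :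
    0 ≤ posterior a P i x :=
  div_nonneg (mul_nonneg (ha i) (hP i x)) (mixture_nonneg ha hP x)

theorem posterior_le_one (ha : ∀ k, 0 ≤ a k) (hP : ∀ k x, 0 ≤ P k x) (i : ι) (x : α) :
    posterior a P i x ≤ 1 :=
  div_le_one_of_le₀ (mul_le_mixture ha hP i x) (mixture_nonneg ha hP x)

theorem posterior_eq_one_iff (ha : ∀ k, 0 < a k) (hP : ∀ k x, 0 ≤ P k x) {i : ι} {x : α}
    (hx : P i x ≠ 0) : posterior a P i x = 1 ↔ ∀ k ≠ i, P k x = 0 := by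
  have hpos : 0 < a i * P i x := mul_pos (ha i) ((hP i x).lt_of_ne' hx)
  refine ⟨fun h => ?_, fun h => ?_⟩
  · by_contra! ⟨k, hki, hk⟩
    have hlt := mul_lt_mixture ha hP hki hk
    exact ((div_lt_one (hpos.trans hlt)).2 hlt).ne h
  · rw [posterior, mixture_eq_of_forall_ne h, div_self hpos.ne']

theorem mixture_rpow_neg_mul_rpow_one_add (ha : ∀ k, 0 < a k) (hP : ∀ k x, 0 ≤ P k x)
    (i : ι) (x : α) {w : ℝ} (hw : 1 + w ≠ 0) :
    mixture a P x ^ (-w) * P i x ^ (1 + w) = a i ^ (-w) * (posterior a P i x ^ w * P i x) := by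
  rcases (hP i x).eq_or_lt' with hx | hx
  · simp [hx, zero_rpow hw]
  have hm : 0 < mixture a P x :=
    (mul_pos (ha i) hx).trans_le (mul_le_mixture (fun k => (ha k).le) hP i x)
  rw [posterior, div_rpow (mul_pos (ha i) hx).le hm.le, mul_rpow (ha i).le hx.le,
    rpow_add hx, rpow_one, rpow_neg hm.le, rpow_neg (ha i).le]
  have haw : a i ^ w ≠ 0 := (rpow_pos_of_pos (ha i) w).ne'
  field_simp

theorem tilted_eq (ha : ∀ k, 0 < a k) (hP : ∀ k x, 0 ≤ P k x) [Fintype α] (i : ι)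
    {w : ℝ} (hw : 1 + w ≠ 0) (x : α) :
    tilted a P i w x = posterior a P i x ^ w * P i x / ∑ y, posterior a P i y ^ w * P i y := by
  simp only [tilted, mixture_rpow_neg_mul_rpow_one_add ha hP i _ hw, ← mul_sum]
  exact mul_div_mul_left _ _ (rpow_pos_of_pos (ha i) _).ne'

theorem sum_posterior_rpow_mul_pos (ha : ∀ k, 0 < a k) (hP : ∀ k x, 0 ≤ P k x) [Fintype α]
    {i : ι} {x : α} (hx : P i x ≠ 0) (w : ℝ) : 0 < ∑ y, posterior a P i y ^ w * P i y :=
  sum_pos'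
    (fun y _ => mul_nonneg (rpow_nonneg (posterior_nonneg (fun k => (ha k).le) hP i y) w) (hP i y))
    ⟨x, mem_univ x, mul_pos (rpow_pos_of_pos (posterior_pos ha hP hx) w) ((hP i x).lt_of_ne' hx)⟩

theorem tendsto_posterior_rpow_mul (ha : ∀ k, 0 < a k) (hP : ∀ k x, 0 ≤ P k x) (i : ι) (x : α) :
    Tendsto (fun w : ℝ => posterior a P i x ^ w * P i x) atTop
      (nhds (if x ∈ support (P i) \ ⋃ k ∈ {k | k ≠ i}, support (P k) then P i x else 0)) := by
  have hlim : (if posterior a P i x = 1 then 1 else 0) * P i x =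
      if x ∈ support (P i) \ ⋃ k ∈ {k | k ≠ i}, support (P k) then P i x else 0 := by
    by_cases hx : P i x = 0
    · simp [hx]
    · simp [posterior_eq_one_iff ha hP hx, hx]
  rw [← hlim]
  exact (tendsto_rpow_atTop_of_nonneg_of_le_one (posterior_nonneg (fun k => (ha k).le) hP i x)
    (posterior_le_one (fun k => (ha k).le) hP i x)).mul_const (P i x)

theorem tendsto_tilted (ha : ∀ k, 0 < a k) (hP : ∀ k x, 0 ≤ P k x) [Fintype α] {i : ι}
    (hE : (support (P i) \ ⋃ k ∈ {k | k ≠ i}, support (P k)).Nonempty) (x : α) :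
    Tendsto (fun w => tilted a P i w x) atTop
      (nhds (if x ∈ support (P i) \ ⋃ k ∈ {k | k ≠ i}, support (P k) then
        P i x / ∑ y ∈ univ.filter (· ∈ support (P i) \ ⋃ k ∈ {k | k ≠ i}, support (P k)), P i y
      else 0)) := by
  set E := support (P i) \ ⋃ k ∈ {k | k ≠ i}, support (P k)
  set L : α → ℝ := fun y => if y ∈ E then P i y else 0
  have hL : ∀ y, Tendsto (fun w : ℝ => posterior a P i y ^ w * P i y) atTop (nhds (L y)) :=
    tendsto_posterior_rpow_mul ha hP i
  have hL_sum : 0 < ∑ y, L y := by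
    obtain ⟨x₀, hx₀⟩ := hE
    refine sum_pos' (fun y _ => ?_) ⟨x₀, mem_univ x₀, ?_⟩
    · simp only [L]
      split_ifs <;> simp [hP i y]
    · simpa only [L, if_pos hx₀] using (hP i x₀).lt_of_ne' hx₀.1
  have hlim : (if x ∈ E then P i x / ∑ y ∈ univ.filter (· ∈ E), P i y else 0) =
      L x / ∑ y, L y := by
    simp only [L, sum_filter]
    split_ifs <;> simp
  rw [hlim]
  refine ((hL x).div (tendsto_finsetSum univ fun y _ => hL y) hL_sum.ne').congr' ?_
  filter_upwards [eventually_ge_atTop 0] with w hw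
  exact (tilted_eq ha hP i (by positivity) x).symm

end FiniteMixture

open FiniteMixture

theorem tilted_overlap_1d_general {α : Type*} [Fintype α]
    (M : ℕ)
    (a : Fin (M + 1) → ℝ) (ha0 : ∀ k, 0 < a k)
    (P : Fin (M + 1) → α → ℝ)
    (hP0 : ∀ k x, 0 ≤ P k x)
    (X : Fin (M + 1) → Set α) (hX : ∀ k, X k = Function.support (P k))
    (S1 : Set α) (hS1 : S1 = X 0 ∩ ⋃ k ∈ {k : Fin (M + 1) | k ≠ 0}, X k)
    (hrestne : (X 0 \ S1).Nonempty)
    (p : α → ℝ) (hp : ∀ x, p x = ∑ k, a k * P k x)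
    (Z : ℝ → ℝ) (hZ : ∀ w, Z w = ∑ x, p x ^ (-w) * P 0 x ^ (1 + w))
    (tilt : ℝ → α → ℝ)
    (htilt : ∀ w x, tilt w x = p x ^ (-w) * P 0 x ^ (1 + w) / Z w) :
    (∀ w : ℝ, 0 ≤ w → ∃ C : ℝ, 0 < C ∧
      (∀ x ∈ X 0 \ S1, tilt w x = C * P 0 x) ∧
      (∀ x ∈ S1, tilt w x =
        C * (a 0 * P 0 x /
          ∑ k ∈ Finset.univ.filter (fun k => k = 0 ∨ (X k ∩ X 0).Nonempty), a k * P k x) ^ w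
          * P 0 x) ∧
      (∀ x ∉ X 0, tilt w x = 0)) ∧
    (∀ x, Tendsto (fun w => tilt w x) atTop
      (nhds (if x ∈ X 0 \ S1 then
        P 0 x / ∑ y ∈ Finset.univ.filter (fun y => y ∈ X 0 \ S1), P 0 y
      else 0))) := by
  obtain rfl : p = mixture a P := funext hp
  obtain rfl : X = fun k => support (P k) := funext hX
  obtain rfl : tilt = tilted a P 0 := by
    funext w x
    rw [htilt, hZ]
    rfl
  subst hS1
  simp only [Set.sdiff_self_inter] at hrestne ⊢
  obtain ⟨x₀, hx₀⟩ := hrestne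
  refine ⟨fun w hw => ?_, tendsto_tilted ha0 hP0 ⟨x₀, hx₀⟩⟩
  have hw' : 1 + w ≠ 0 := by positivity
  refine ⟨(∑ y, posterior a P 0 y ^ w * P 0 y)⁻¹,
    inv_pos.2 (sum_posterior_rpow_mul_pos ha0 hP0 hx₀.1 w), fun x hx => ?_, fun x hx => ?_,
    fun x hx => ?_⟩ <;> rw [tilted_eq ha0 hP0 0 hw']
  · rw [(posterior_eq_one_iff ha0 hP0 hx.1).2 (by simpa using hx.2), one_rpow, one_mul,
      div_eq_inv_mul]
  · rw [posterior, ← mixture_eq_sum_overlap hx.1, div_eq_inv_mul, mul_assoc]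
  · simp [notMem_support.1 hx]

/-- 1D overlapping-support case.  With `X_k = supp p(·|z_k)`,
`S_1 = X_1 ∩ ⋃_{k≥2} X_k ≠ ∅` and `I_1 = {k ≥ 2 : X_k ∩ X_1 ≠ ∅}`, the tilted
distribution is proportional to `p(·|z_1)` on `X_1 \ S_1`, to
`(a_1 p(x|z_1) / Σ_{k ∈ I_1∪{1}} a_k p(x|z_k))^w p(x|z_1)` on `S_1`, and vanishes
elsewhere; as `w → ∞` it converges pointwise to the normalized restriction of
`p(·|z_1)` to `X_1 \ S_1`. -/
theorem tilted_overlap_1d {α : Type*} [Fintype α] [DecidableEq α]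
    (M : ℕ)
    (a : Fin (M + 1) → ℝ) (ha0 : ∀ k, 0 < a k) (ha1 : ∑ k, a k = 1)
    (P : Fin (M + 1) → α → ℝ)
    (hP0 : ∀ k x, 0 ≤ P k x) (hP1 : ∀ k, ∑ x, P k x = 1)
    (X : Fin (M + 1) → Set α) (hX : ∀ k, X k = Function.support (P k))
    (S1 : Set α) (hS1 : S1 = X 0 ∩ ⋃ k ∈ {k : Fin (M + 1) | k ≠ 0}, X k)
    (hS1ne : S1.Nonempty) (hrestne : (X 0 \ S1).Nonempty)
    (p : α → ℝ) (hp : ∀ x, p x = ∑ k, a k * P k x)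
    (Z : ℝ → ℝ) (hZ : ∀ w, Z w = ∑ x, p x ^ (-w) * P 0 x ^ (1 + w))
    (tilt : ℝ → α → ℝ)
    (htilt : ∀ w x, tilt w x = p x ^ (-w) * P 0 x ^ (1 + w) / Z w) :
    (∀ w : ℝ, 0 ≤ w → ∃ C : ℝ, 0 < C ∧
      (∀ x ∈ X 0 \ S1, tilt w x = C * P 0 x) ∧
      (∀ x ∈ S1, tilt w x =
        C * (a 0 * P 0 x /
          ∑ k ∈ Finset.univ.filter (fun k => k = 0 ∨ (X k ∩ X 0).Nonempty), a k * P k x) ^ w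
          * P 0 x) ∧
      (∀ x ∉ X 0, tilt w x = 0)) ∧
    (∀ x, Tendsto (fun w => tilt w x) atTop
      (nhds (if x ∈ X 0 \ S1 then
        P 0 x / ∑ y ∈ Finset.univ.filter (fun y => y ∈ X 0 \ S1), P 0 y
      else 0))) :=
  tilted_overlap_1d_general M a ha0 P hP0 X hX S1 hS1 hrestne p hp Z hZ tilt htilt
end

section
/- In the 2D mixture setting, if the marginal supports of class z_1 are disjoint from those of all other classes in both coordinates (X_{1,d} ∩ X_{k,d} = ∅ for d = 1,2 and k = 2,...,M), then the guided sampled distribution q_T^{z_1,w}(x) = ((1/c_{x_1}+1/d_{x_2})/(1/c_N+1/d_N)) p^{z_1,w}(x) equals p(·|z_1) exactly for all w ≥ 0. -/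
open Real Finset
open scoped Classical

/-- in the 2D mixture setting, if both marginal supports of class `z₁` are
disjoint from those of every other class, then the guided sampled distribution
`q_T^{z₁,w}(x) = ((1/c_{x₁}+1/d_{x₂})/(1/c_N+1/d_N)) p^{z₁,w}(x)` equals `p(·|z₁)`
for all `w ≥ 0`. -/
theorem sampled_2d_disjoint_marginals {ι : Type*} [Fintype ι] [DecidableEq ι]
    (M : ℕ)
    (a : Fin (M + 1) → ℝ) (ha0 : ∀ k, 0 < a k) (ha1 : ∑ k, a k = 1)
    (P : Fin (M + 1) → ι × ι → ℝ)
    (hP0 : ∀ k x, 0 ≤ P k x) (hP1 : ∀ k, ∑ x, P k x = 1)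
    (X : Fin (M + 1) → Set (ι × ι)) (hX : ∀ k, X k = Function.support (P k))
    (hdisj1 : ∀ k : Fin (M + 1), k ≠ 0 →
      {x1 | ∃ x2, (x1, x2) ∈ X 0} ∩ {x1 | ∃ x2, (x1, x2) ∈ X k} = ∅)
    (hdisj2 : ∀ k : Fin (M + 1), k ≠ 0 →
      {x2 | ∃ x1, (x1, x2) ∈ X 0} ∩ {x2 | ∃ x1, (x1, x2) ∈ X k} = ∅)
    (w : ℝ) (hw : 0 ≤ w)
    (p : ι × ι → ℝ) (hp : ∀ x, p x = ∑ k, a k * P k x)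
    (Z : ℝ) (hZ : Z = ∑ x : ι × ι, p x ^ (-w) * P 0 x ^ (1 + w))
    (c d : ι → ℝ)
    (hc : ∀ x1, c x1 =
      (∑ l, p (x1, l) ^ (-w) * P 0 (x1, l) ^ (1 + w)) /
        ((∑ l, p (x1, l)) ^ (-w) * (∑ l, P 0 (x1, l)) ^ (1 + w)))
    (hd : ∀ x2, d x2 =
      (∑ l, p (l, x2) ^ (-w) * P 0 (l, x2) ^ (1 + w)) /
        ((∑ l, p (l, x2)) ^ (-w) * (∑ l, P 0 (l, x2)) ^ (1 + w)))
    (cN dN : ℝ)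
    (hcN : cN = Z / ∑ l1, (∑ l2, p (l1, l2)) ^ (-w) * (∑ l2, P 0 (l1, l2)) ^ (1 + w))
    (hdN : dN = Z / ∑ l2, (∑ l1, p (l1, l2)) ^ (-w) * (∑ l1, P 0 (l1, l2)) ^ (1 + w))
    (q : ι × ι → ℝ)
    (hq : ∀ x : ι × ι, q x =
      ((1 / c x.1 + 1 / d x.2) / (1 / cN + 1 / dN)) *
        (p x ^ (-w) * P 0 x ^ (1 + w) / Z)) :
    ∀ x, q x = P 0 x := by

  have ha0pos := ha0 0
  have haw : (0:ℝ) < a 0 ^ (-w) := Real.rpow_pos_of_pos ha0pos _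
  have h1w : (1 + w) ≠ 0 := by positivity
  -- other classes vanish on the first marginal support of class 0
  have hA : ∀ x1 : ι, (∃ x2, P 0 (x1, x2) ≠ 0) → ∀ l, p (x1, l) = a 0 * P 0 (x1, l) := by
    intro x1 hx1 l
    rw [hp]
    refine Finset.sum_eq_single 0 (fun k _ hk => ?_) (fun h => absurd (Finset.mem_univ _) h)
    have hzero : P k (x1, l) = 0 := by
      by_contra hne
      obtain ⟨x2, h2⟩ := hx1
      have hmem : x1 ∈ ({y | ∃ x2, (y, x2) ∈ X 0} ∩ {y | ∃ x2, (y, x2) ∈ X k}) := by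
        constructor
        · exact ⟨x2, by rw [hX]; exact h2⟩
        · exact ⟨l, by rw [hX]; exact hne⟩
      rw [hdisj1 k hk] at hmem
      exact hmem
    rw [hzero, mul_zero]
  have hB : ∀ x2 : ι, (∃ x1, P 0 (x1, x2) ≠ 0) → ∀ l, p (l, x2) = a 0 * P 0 (l, x2) := by
    intro x2 hx2 l
    rw [hp]
    refine Finset.sum_eq_single 0 (fun k _ hk => ?_) (fun h => absurd (Finset.mem_univ _) h)
    have hzero : P k (l, x2) = 0 := by
      by_contra hne
      obtain ⟨x1, h1⟩ := hx2
      have hmem : x2 ∈ ({y | ∃ x1, (x1, y) ∈ X 0} ∩ {y | ∃ x1, (x1, y) ∈ X k}) := by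
        constructor
        · exact ⟨x1, by rw [hX]; exact h1⟩
        · exact ⟨l, by rw [hX]; exact hne⟩
      rw [hdisj2 k hk] at hmem
      exact hmem
    rw [hzero, mul_zero]
  -- key term identity
  have hT : ∀ y : ι × ι, p y ^ (-w) * P 0 y ^ (1 + w) = a 0 ^ (-w) * P 0 y := by
    intro y
    by_cases h : P 0 y = 0
    · rw [h, Real.zero_rpow h1w, mul_zero, mul_zero]
    · have hpy : p y = a 0 * P 0 y := by
        have := hA y.1 ⟨y.2, by simpa using h⟩ y.2
        simpa using this
      have hP0y : 0 < P 0 y := lt_of_le_of_ne (hP0 0 y) (Ne.symm h)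
      rw [hpy, Real.mul_rpow ha0pos.le (hP0 0 y), mul_assoc,
        ← Real.rpow_add hP0y, show -w + (1 + w) = 1 by ring, Real.rpow_one]
  -- Z = a 0 ^ (-w)
  have hZval : Z = a 0 ^ (-w) := by
    rw [hZ]
    calc ∑ x : ι × ι, p x ^ (-w) * P 0 x ^ (1 + w)
        = ∑ x : ι × ι, a 0 ^ (-w) * P 0 x := Finset.sum_congr rfl fun y _ => hT y
      _ = a 0 ^ (-w) * ∑ x : ι × ι, P 0 x := by rw [← Finset.mul_sum]
      _ = a 0 ^ (-w) := by rw [hP1 0, mul_one]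
  -- c x1 = 1 on the first marginal support
  have hcval : ∀ x1 : ι, (∃ x2, P 0 (x1, x2) ≠ 0) → c x1 = 1 := by
    intro x1 hx1
    obtain ⟨x2, h2⟩ := hx1
    have hm0pos : 0 < ∑ l, P 0 (x1, l) :=
      Finset.sum_pos' (fun l _ => hP0 0 _)
        ⟨x2, Finset.mem_univ _, lt_of_le_of_ne (hP0 0 _) (Ne.symm h2)⟩
    have hs1 : ∑ l, p (x1, l) ^ (-w) * P 0 (x1, l) ^ (1 + w)
        = a 0 ^ (-w) * ∑ l, P 0 (x1, l) := by
      rw [Finset.mul_sum]; exact Finset.sum_congr rfl fun l _ => hT (x1, l)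
    have hsp : ∑ l, p (x1, l) = a 0 * ∑ l, P 0 (x1, l) := by
      rw [Finset.mul_sum]; exact Finset.sum_congr rfl fun l _ => hA x1 ⟨x2, h2⟩ l
    rw [hc, hs1, hsp, Real.mul_rpow ha0pos.le hm0pos.le, mul_assoc,
      ← Real.rpow_add hm0pos, show -w + (1 + w) = 1 by ring, Real.rpow_one]
    exact div_self (by positivity)
  have hdval : ∀ x2 : ι, (∃ x1, P 0 (x1, x2) ≠ 0) → d x2 = 1 := by
    intro x2 hx2
    obtain ⟨x1, h1⟩ := hx2
    have hm0pos : 0 < ∑ l, P 0 (l, x2) :=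
      Finset.sum_pos' (fun l _ => hP0 0 _)
        ⟨x1, Finset.mem_univ _, lt_of_le_of_ne (hP0 0 _) (Ne.symm h1)⟩
    have hs1 : ∑ l, p (l, x2) ^ (-w) * P 0 (l, x2) ^ (1 + w)
        = a 0 ^ (-w) * ∑ l, P 0 (l, x2) := by
      rw [Finset.mul_sum]; exact Finset.sum_congr rfl fun l _ => hT (l, x2)
    have hsp : ∑ l, p (l, x2) = a 0 * ∑ l, P 0 (l, x2) := by
      rw [Finset.mul_sum]; exact Finset.sum_congr rfl fun l _ => hB x2 ⟨x1, h1⟩ l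
    rw [hd, hs1, hsp, Real.mul_rpow ha0pos.le hm0pos.le, mul_assoc,
      ← Real.rpow_add hm0pos, show -w + (1 + w) = 1 by ring, Real.rpow_one]
    exact div_self (by positivity)
  -- cN = 1
  have hcden : ∀ l1 : ι, (∑ l2, p (l1, l2)) ^ (-w) * (∑ l2, P 0 (l1, l2)) ^ (1 + w)
      = a 0 ^ (-w) * ∑ l2, P 0 (l1, l2) := by
    intro l1
    by_cases hm : (∑ l2, P 0 (l1, l2)) = 0
    · rw [hm, Real.zero_rpow h1w, mul_zero, mul_zero]
    · have hex : ∃ l2, P 0 (l1, l2) ≠ 0 := by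
        by_contra hno
        push_neg at hno
        exact hm (Finset.sum_eq_zero fun l _ => hno l)
      have hm0pos : 0 < ∑ l2, P 0 (l1, l2) := lt_of_le_of_ne
        (Finset.sum_nonneg fun l _ => hP0 0 _) (Ne.symm hm)
      have hsp : ∑ l2, p (l1, l2) = a 0 * ∑ l2, P 0 (l1, l2) := by
        rw [Finset.mul_sum]; exact Finset.sum_congr rfl fun l _ => hA l1 hex l
      rw [hsp, Real.mul_rpow ha0pos.le hm0pos.le, mul_assoc,
        ← Real.rpow_add hm0pos, show -w + (1 + w) = 1 by ring, Real.rpow_one]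
  have hcNval : cN = 1 := by
    rw [hcN, hZval]
    have : ∑ l1, (∑ l2, p (l1, l2)) ^ (-w) * (∑ l2, P 0 (l1, l2)) ^ (1 + w)
        = a 0 ^ (-w) := by
      calc ∑ l1, (∑ l2, p (l1, l2)) ^ (-w) * (∑ l2, P 0 (l1, l2)) ^ (1 + w)
          = ∑ l1, a 0 ^ (-w) * ∑ l2, P 0 (l1, l2) :=
            Finset.sum_congr rfl fun l1 _ => hcden l1
        _ = a 0 ^ (-w) * ∑ l1, ∑ l2, P 0 (l1, l2) := by rw [← Finset.mul_sum]
        _ = a 0 ^ (-w) := by rw [← Fintype.sum_prod_type, hP1 0, mul_one]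
    rw [this]
    exact div_self (by positivity)
  have hdden : ∀ l2 : ι, (∑ l1, p (l1, l2)) ^ (-w) * (∑ l1, P 0 (l1, l2)) ^ (1 + w)
      = a 0 ^ (-w) * ∑ l1, P 0 (l1, l2) := by
    intro l2
    by_cases hm : (∑ l1, P 0 (l1, l2)) = 0
    · rw [hm, Real.zero_rpow h1w, mul_zero, mul_zero]
    · have hex : ∃ l1, P 0 (l1, l2) ≠ 0 := by
        by_contra hno
        push_neg at hno
        exact hm (Finset.sum_eq_zero fun l _ => hno l)
      have hm0pos : 0 < ∑ l1, P 0 (l1, l2) := lt_of_le_of_ne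
        (Finset.sum_nonneg fun l _ => hP0 0 _) (Ne.symm hm)
      have hsp : ∑ l1, p (l1, l2) = a 0 * ∑ l1, P 0 (l1, l2) := by
        rw [Finset.mul_sum]; exact Finset.sum_congr rfl fun l _ => hB l2 hex l
      rw [hsp, Real.mul_rpow ha0pos.le hm0pos.le, mul_assoc,
        ← Real.rpow_add hm0pos, show -w + (1 + w) = 1 by ring, Real.rpow_one]
  have hdNval : dN = 1 := by
    rw [hdN, hZval]
    have : ∑ l2, (∑ l1, p (l1, l2)) ^ (-w) * (∑ l1, P 0 (l1, l2)) ^ (1 + w)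
        = a 0 ^ (-w) := by
      calc ∑ l2, (∑ l1, p (l1, l2)) ^ (-w) * (∑ l1, P 0 (l1, l2)) ^ (1 + w)
          = ∑ l2, a 0 ^ (-w) * ∑ l1, P 0 (l1, l2) :=
            Finset.sum_congr rfl fun l2 _ => hdden l2
        _ = a 0 ^ (-w) * ∑ l2, ∑ l1, P 0 (l1, l2) := by rw [← Finset.mul_sum]
        _ = a 0 ^ (-w) := by
            rw [Finset.sum_comm, ← Fintype.sum_prod_type, hP1 0, mul_one]
    rw [this]
    exact div_self (by positivity)
  -- conclusion
  intro x
  rw [hq, hT x]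
  by_cases h : P 0 x = 0
  · rw [h, mul_zero, zero_div, mul_zero]
  · have hc1 : c x.1 = 1 := hcval x.1 ⟨x.2, by simpa using h⟩
    have hd1 : d x.2 = 1 := hdval x.2 ⟨x.1, by simpa using h⟩
    rw [hc1, hd1, hcNval, hdNval, hZval]
    field_simp
end

section
/- In the 2D guided reverse dynamics, the mass at the fully masked state evolves as q_t^{z,w}(N,N) = ((1-e^{-(T-t)})/(1-e^{-T}))^{-λ}, where -λ = Σ_{l_1} p(l_1)^{-w}p(l_1|z)^{1+w} + Σ_{l_2} p(l_2)^{-w}p(l_2|z)^{1+w}. In particular q_0^{z,w}(N,N) = 1 and q_T^{z,w}(N,N) = 0, and q_t^{z,w}(N,N) is strictly decreasing in t on [0,T). -/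
open Real Finset

/-! With `u t = 1 - e^{-(T-t)}` one has `u' = -e^{-(T-t)}`, so the masked-state equation reads
`q' = -λ (u'/u) q` and `q · u^λ` is constant on `[0, T)`; this gives the closed form there,
and continuity carries it to `t = T`, where `u` vanishes. That `λ < 0`, which makes the mass
vanish at `T` and decrease strictly, comes from the support condition `p(·|z) ≪ p`: some
marginal of `p(·|z)` is positive and so is the corresponding marginal of `p`. -/

theorem Finset.sum_pos_of_pos_imp_pos {α : Type*} {s : Finset α} {f g : α → ℝ}
    (hf : ∀ i ∈ s, 0 ≤ f i) (hgf : ∀ i ∈ s, 0 < g i → 0 < f i) (hg : 0 < ∑ i ∈ s, g i) :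
    0 < ∑ i ∈ s, f i := by
  obtain ⟨i, hi, hgi⟩ := exists_lt_of_sum_lt (f := fun _ => (0 : ℝ)) (by simpa using hg)
  exact sum_pos' hf ⟨i, hi, hgf i hi hgi⟩

theorem sum_marginal_rpow_mul_rpow_pos {α β : Type*} [Fintype α] [Fintype β]
    {p q : α × β → ℝ} (hp : ∀ x, 0 ≤ p x) (hq : ∀ x, 0 ≤ q x)
    (hsupp : ∀ x, 0 < q x → 0 < p x) (hq_sum : 0 < ∑ x, q x) (a b : ℝ) :
    0 < ∑ i, (∑ j, p (i, j)) ^ a * (∑ j, q (i, j)) ^ b := by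
  refine sum_pos_of_pos_imp_pos (g := fun i => ∑ j, q (i, j)) (fun i _ => ?_) (fun i _ hi => ?_)
    (by rwa [← Fintype.sum_prod_type])
  · exact mul_nonneg (rpow_nonneg (sum_nonneg fun j _ => hp _) a)
      (rpow_nonneg (sum_nonneg fun j _ => hq _) b)
  · have hpi : 0 < ∑ j, p (i, j) :=
      sum_pos_of_pos_imp_pos (fun j _ => hp _) (fun j _ => hsupp _) hi
    exact mul_pos (rpow_pos_of_pos hpi a) (rpow_pos_of_pos hi b)

theorem eq_mul_div_rpow_of_hasDerivAt {f u u' : ℝ → ℝ} {a b c : ℝ}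
    (hu : ∀ t ∈ Set.Ico a b, HasDerivAt u (u' t) t) (hu_pos : ∀ t ∈ Set.Ico a b, 0 < u t)
    (hf : ∀ t ∈ Set.Ico a b, HasDerivAt f (c * (u' t / u t) * f t) t) :
    ∀ t ∈ Set.Ico a b, f t = f a * (u t / u a) ^ c := by
  intro t ht
  have hinv : ∀ s ∈ Set.Ico a b, HasDerivAt (fun s => f s * u s ^ (-c)) 0 s := by
    intro s hs
    have hus := hu_pos s hs
    refine ((hf s hs).mul ((hu s hs).rpow_const (p := -c) (Or.inl hus.ne'))).congr_deriv ?_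
    rw [rpow_sub_one hus.ne']
    field_simp
    ring
  have hconst := constant_of_has_deriv_right_zero (a := a) (b := t)
    (fun s hs => (hinv s ⟨hs.1, hs.2.trans_lt ht.2⟩).continuousAt.continuousWithinAt)
    (fun s hs => (hinv s ⟨hs.1, hs.2.trans ht.2⟩).hasDerivWithinAt) t ⟨ht.1, le_rfl⟩
  have hua := hu_pos a ⟨le_rfl, ht.1.trans_lt ht.2⟩
  have hut := hu_pos t ht
  rw [rpow_neg hut.le, rpow_neg hua.le] at hconst
  rw [div_rpow hut.le hua.le]
  field_simp at hconst ⊢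
  linarith

theorem hasDerivAt_one_sub_exp_neg_sub (T t : ℝ) :
    HasDerivAt (fun s => 1 - exp (-(T - s))) (-exp (-(T - t))) t := by
  simpa using (((hasDerivAt_id t).const_sub T).neg.exp).const_sub 1

theorem one_sub_exp_neg_sub_pos {T t : ℝ} (h : t < T) : 0 < 1 - exp (-(T - t)) := by
  simpa using h

/-- The paper's `q_t(N,N)`, with `r = -λ`. -/
noncomputable def maskedMass (T r t : ℝ) : ℝ := ((1 - exp (-(T - t))) / (1 - exp (-T))) ^ r

theorem continuous_maskedMass {T r : ℝ} (hr : 0 ≤ r) : Continuous (maskedMass T r) :=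
  (continuous_rpow_const hr).comp (by fun_prop)

theorem maskedMass_self {T r : ℝ} (hr : r ≠ 0) : maskedMass T r T = 0 := by
  simp [maskedMass, zero_rpow hr]

theorem strictAntiOn_maskedMass {T r : ℝ} (hT : 0 < T) (hr : 0 < r) :
    StrictAntiOn (maskedMass T r) (Set.Iic T) := by
  intro s hs t ht hst
  have hc : 0 < 1 - exp (-T) := by simpa using hT
  have ht0 : 0 ≤ 1 - exp (-(T - t)) := by simpa using ht
  exact rpow_lt_rpow (div_nonneg ht0 hc.le)
    (div_lt_div_of_pos_right (by simpa using hst) hc) hr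

theorem masked_mass_2d_general {ι : Type*} [Fintype ι]
    (p pz : ι × ι → ℝ)
    (hp0 : ∀ x, 0 ≤ p x)
    (hpz0 : ∀ x, 0 ≤ pz x) (hpz1 : ∑ x, pz x = 1)
    (hsupp : ∀ x, 0 < pz x → 0 < p x)
    (w : ℝ)
    (lam : ℝ)
    (hlam : lam = -((∑ l1, (∑ l2, p (l1, l2)) ^ (-w) * (∑ l2, pz (l1, l2)) ^ (1 + w)) +
      ∑ l2, (∑ l1, p (l1, l2)) ^ (-w) * (∑ l1, pz (l1, l2)) ^ (1 + w)))
    (T : ℝ) (hT : 0 < T)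
    (f : ℝ → ℝ)
    (hf0 : f 0 = 1)
    (hfc : ContinuousOn f (Set.Icc 0 T))
    (hode : ∀ t ∈ Set.Ico (0 : ℝ) T, HasDerivAt f
      (Real.exp (-(T - t)) / (1 - Real.exp (-(T - t))) * lam * f t) t) :
    (∀ t ∈ Set.Icc (0 : ℝ) T,
        f t = ((1 - Real.exp (-(T - t))) / (1 - Real.exp (-T))) ^ (-lam)) ∧
      f 0 = 1 ∧ f T = 0 ∧ StrictAntiOn f (Set.Ico 0 T) := by
  have hlam_neg : lam < 0 := by
    have hpz_swap : ∑ x : ι × ι, pz x.swap = 1 := ((Equiv.prodComm ι ι).sum_comp pz).trans hpz1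
    have h₁ := sum_marginal_rpow_mul_rpow_pos hp0 hpz0 hsupp (hpz1 ▸ one_pos) (-w) (1 + w)
    have h₂ : 0 < ∑ l2, (∑ l1, p (l1, l2)) ^ (-w) * (∑ l1, pz (l1, l2)) ^ (1 + w) :=
      sum_marginal_rpow_mul_rpow_pos (p := fun x => p x.swap) (q := fun x => pz x.swap)
        (fun x => hp0 x.swap) (fun x => hpz0 x.swap) (fun x => hsupp x.swap)
        (hpz_swap ▸ one_pos) (-w) (1 + w)
    linarith
  have hopen : Set.EqOn f (maskedMass T (-lam)) (Set.Ico 0 T) := by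
    intro t ht
    rw [eq_mul_div_rpow_of_hasDerivAt (c := -lam)
      (u' := fun s => -exp (-(T - s))) (fun s _ => hasDerivAt_one_sub_exp_neg_sub T s)
      (fun s hs => one_sub_exp_neg_sub_pos hs.2)
      (fun s hs => (hode s hs).congr_deriv (by ring)) t ht, hf0, one_mul, sub_zero,
      maskedMass]
  have hclosed : Set.EqOn f (maskedMass T (-lam)) (Set.Icc 0 T) :=
    hopen.of_subset_closure hfc (continuous_maskedMass (by linarith)).continuousOn
      Set.Ico_subset_Icc_self (closure_Ico hT.ne).ge
  refine ⟨hclosed, hf0, (hclosed ⟨hT.le, le_rfl⟩).trans (maskedMass_self (by linarith)), ?_⟩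
  exact ((strictAntiOn_maskedMass hT (by linarith)).mono fun t ht => ht.2.le).congr hopen.symm

/-- in the 2D guided reverse dynamics, the mass at the fully masked state
satisfies `q_t(N,N) = ((1-e^{-(T-t)})/(1-e^{-T}))^{-λ}` where
`-λ = Σ_{l₁} p(l₁)^{-w} p(l₁|z)^{1+w} + Σ_{l₂} p(l₂)^{-w} p(l₂|z)^{1+w}`; in particular
`q_0(N,N) = 1`, `q_T(N,N) = 0`, and `t ↦ q_t(N,N)` is strictly decreasing on `[0,T)`. -/
theorem masked_mass_2d {ι : Type*} [Fintype ι] [DecidableEq ι]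
    (p pz : ι × ι → ℝ)
    (hp0 : ∀ x, 0 ≤ p x) (hp1 : ∑ x, p x = 1)
    (hpz0 : ∀ x, 0 ≤ pz x) (hpz1 : ∑ x, pz x = 1)
    (hsupp : ∀ x, 0 < pz x → 0 < p x)
    (w : ℝ) (hw : 0 < w)
    (lam : ℝ)
    (hlam : lam = -((∑ l1, (∑ l2, p (l1, l2)) ^ (-w) * (∑ l2, pz (l1, l2)) ^ (1 + w)) +
      ∑ l2, (∑ l1, p (l1, l2)) ^ (-w) * (∑ l1, pz (l1, l2)) ^ (1 + w)))
    (T : ℝ) (hT : 0 < T)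
    (f : ℝ → ℝ)
    (hf0 : f 0 = 1)
    (hfc : ContinuousOn f (Set.Icc 0 T))
    (hode : ∀ t ∈ Set.Ico (0 : ℝ) T, HasDerivAt f
      (Real.exp (-(T - t)) / (1 - Real.exp (-(T - t))) * lam * f t) t) :
    (∀ t ∈ Set.Icc (0 : ℝ) T,
        f t = ((1 - Real.exp (-(T - t))) / (1 - Real.exp (-T))) ^ (-lam)) ∧
      f 0 = 1 ∧ f T = 0 ∧ StrictAntiOn f (Set.Ico 0 T) :=
  masked_mass_2d_general p pz hp0 hpz0 hpz1 hsupp w lam hlam T hT f hf0 hfc hode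
end
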